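/- Let a = (a_i)_{i∈ℤ} be any doubly infinite sequence and define the multiparameter Schur functions s_{μ;a} = det[h_{μ_i−i+j; τ^{1−j}a}] where the h_{k;a} are determined by 1 + Σ_{k≥1} h_{k;a}/((u−a_1)⋯(u−a_k)) = H(u) and (τ^r a)_i = a_{i+r}. Then the multiparameter Schur functions satisfy the Giambelli formula: s_{μ;a} = det[ s_{(p_i|q_j);a} ]_{i,j=1}^d for every partition μ = (p_1,…,p_d | q_1,…,q_d). -/

import Mathlib

/-!
STATEMENT 8: the multiparameter Schur functions satisfy the Giambelli formula.

Λ is realized as ℂ[h₁, h₂, …].  For a doubly infinite sequence `a : ℤ → ℂ`,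
the multiparameter analogs `h_{k;a}` are determined by the generating series
identity `1 + Σ_{k≥1} h_{k;a}/((u−a₁)⋯(u−a_k)) = H(u)`.  Since
`1/((u−a₁)⋯(u−a_k)) = Σ_{n≥k} h_{n−k}(a₁,…,a_k) u^{−n}` (complete homogeneous
symmetric polynomials of the numbers `a₁,…,a_k`), this generating series
identity is equivalent, coefficientwise, to the triangular relations
`h_n = Σ_{k=0}^n h_{k;a} · h_{n−k}(a₁,…,a_k)` for all `n ≥ 1`, which is how the
defining property is encoded below (for the sequence `a` and all its shifts,
as required by the definition of `s_{μ;a}`).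
-/

noncomputable section

/-- The ring of symmetric functions over ℂ, realized as `ℂ[h₁, h₂, …]`. -/
abbrev SymFn : Type := MvPolynomial ℕ ℂ

/-- Complete homogeneous symmetric functions (`h_0 = 1`, `h_k = 0` for `k < 0`). -/
def hh (k : ℤ) : SymFn :=
  if k < 0 then 0 else if k = 0 then 1 else MvPolynomial.X k.toNat

/-- The hook partition `(p|q) = (p+1, 1^q)` (0-indexed parts). -/
def hookP (p q : ℕ) : ℕ → ℕ := fun i => if i = 0 then p + 1 else if i ≤ q then 1 else 0

/-- The conjugate partition `μ'_i = #{j : μ_j > i}` (0-indexed). -/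
def conjP (μ : ℕ → ℕ) (i : ℕ) : ℕ := Nat.card {j : ℕ // i < μ j}

/-- The shifted sequence `(τ^r a)_i = a_{i+r}`. -/
def shiftSeq (a : ℤ → ℂ) (r : ℤ) : ℤ → ℂ := fun i => a (i + r)

/-- The complete homogeneous symmetric polynomial `h_j(b₁,…,b_k)` of the
numbers `b₁,…,b_k`. -/
def hNum (b : ℤ → ℂ) (k j : ℕ) : ℂ :=
  ∑ m ∈ (Finset.range k).sym j, ((m : Multiset ℕ).map fun i => b ((i : ℤ) + 1)).prod

/-- The multiparameter Schur function
`s_{μ;a} = det[ h_{μ_i − i + j ; τ^{1−j} a} ]_{i,j=1}^k` (0-indexed `i, j`, so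
the shift is `τ^{−j} a` for `j : Fin k`). -/
def mpSchur (hma : (ℤ → ℂ) → ℤ → SymFn) (a : ℤ → ℂ) (μ : ℕ → ℕ) (k : ℕ) : SymFn :=
  Matrix.det (Matrix.of fun i j : Fin k =>
    hma (shiftSeq a (-(j : ℤ))) ((μ i : ℤ) - (i : ℤ) + (j : ℤ)))


/-!
Write `H r j` for `h_{r; τ^{-j} a}` and `ρ(m) = (H (m + j) j)_j`, so that the Jacobi–Trudi matrix
of `ν` has rows `ρ(ν_i - i)`. Since `h_{0;b} = 1` and `h_{r;b} = 0` for `r < 0`, the rows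
`ρ(0), ρ(-1), …, ρ(1 - n)` form an upper unitriangular matrix `U`; writing `ρ(m) = c(m) U`, the
vector `c(-t)` is the `t`-th unit vector and `s_ν = det [c(ν_i - i)]`.
If `μ` has Durfee square `d`, the rows `c(μ_i - i)` with `i ≥ d` are unit vectors, and expanding
along them leaves `± det [c(μ_i - i)_{q_j}]` with `q_j = μ'_j - j - 1`. A hook `(p|q)` has a single
row that is not a unit vector, whence `s_{(p|q)} = (-1)^q c(p+1)_q`; the signs agree because
`∑_j q_j = ∑_{j<d} j + ∑_{i≥d} μ_i`.
-/

open Matrix Finset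

theorem Fin.eq_rev_of_strictAnti {n : ℕ} {q : Fin n → Fin n} (hq : StrictAnti q) :
    q = Fin.rev := by
  have h : Fin.rev ∘ q = id := (Fin.rev_strictAnti.comp hq).eq_id
  funext j
  exact Fin.rev_eq_iff.mp (congrFun h j)

theorem Fin.val_succAbove_eq_iff_of_lt {n x : ℕ} {p : Fin (n + 1)} (hx : x < p) (j : Fin n) :
    (p.succAbove j : ℕ) = x ↔ (j : ℕ) = x := by
  unfold Fin.succAbove
  split_ifs with h
  · exact Iff.rfl
  · simp only [Fin.lt_def, Fin.val_castSucc, Fin.val_succ] at h ⊢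
    omega

namespace Matrix

variable {R : Type*} [CommRing R]

theorem det_eq_of_row_eq_single {n : ℕ} (M : Matrix (Fin (n + 1)) (Fin (n + 1)) R)
    {i j : Fin (n + 1)} (h : M i = Pi.single j 1) :
    M.det = (-1) ^ (i + j : ℕ) * (M.submatrix i.succAbove j.succAbove).det := by
  rw [det_succ_row M i, Fintype.sum_eq_single j fun j' hj' => by simp [h, hj']]
  simp [h]

theorem det_submatrix_rev {n : ℕ} (M : Matrix (Fin n) (Fin n) R) :
    (M.submatrix id Fin.rev).det = (-1) ^ (∑ j : Fin n, (j : ℕ)) * M.det := by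
  have hsign : Equiv.Perm.sign (Fin.revPerm : Equiv.Perm (Fin n)) =
      (-1) ^ (∑ j : Fin n, (j : ℕ)) := by
    rw [Equiv.Perm.sign_eq_prod_prod_Iio, ← prod_pow_eq_pow_sum]
    refine prod_congr rfl fun j _ => ?_
    rw [prod_congr rfl fun i hi => if_neg (by simpa using (mem_Iio.mp hi).le), prod_const,
      Fin.card_Iio]
  have h := det_permute' (Fin.revPerm : Equiv.Perm (Fin n)) M
  simp only [hsign, Units.val_pow_eq_pow_val, Units.val_neg, Units.val_one, Int.cast_pow,
    Int.cast_neg, Int.cast_one] at h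
  exact h

theorem det_eq_of_lower_rows_eq_single {d k : ℕ} (hdk : d ≤ k) (M : Matrix (Fin k) (Fin k) R)
    (τ : ℕ → ℕ) (q : Fin d → Fin k)
    (hM : ∀ i : Fin k, d ≤ (i : ℕ) → ∀ j : Fin k, M i j = if (j : ℕ) = τ i then 1 else 0)
    (hτ : StrictMonoOn τ (Set.Ico d k)) (hτk : ∀ i ∈ Set.Ico d k, τ i < k)
    (hq : StrictAnti q) (hqτ : ∀ i ∈ Set.Ico d k, ∀ j, (q j : ℕ) ≠ τ i) :
    M.det = (-1) ^ (∑ j : Fin d, (j : ℕ) + ∑ i ∈ Ico d k, (i - τ i)) *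
      (of fun i j : Fin d => M (Fin.castLE hdk i) (q j)).det := by
  induction k, hdk using Nat.le_induction with
  | base =>
    obtain rfl := Fin.eq_rev_of_strictAnti hq
    have hA : (of fun i j : Fin d => M (Fin.castLE le_rfl i) (Fin.rev j)) =
        M.submatrix id Fin.rev := rfl
    rw [hA, det_submatrix_rev, Ico_self, sum_empty, add_zero, ← mul_assoc, ← pow_add,
      Even.neg_one_pow ⟨_, rfl⟩, one_mul]
  | succ k hdk ih =>
    have hkτ : k ∈ Set.Ico d (k + 1) := ⟨hdk, k.lt_succ_self⟩
    set m : Fin (k + 1) := ⟨τ k, hτk k hkτ⟩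
    have hτm : ∀ i ∈ Set.Ico d k, τ i < m := fun i hi =>
      hτ ⟨hi.1, hi.2.trans k.lt_succ_self⟩ hkτ hi.2
    have hlast : M (Fin.last k) = Pi.single m 1 := by
      funext j
      rw [hM _ hdk j]
      simp [Pi.single_apply, Fin.ext_iff, m]
    have hqm : ∀ j, ∃ z, m.succAbove z = q j := fun j =>
      Fin.exists_succAbove_eq fun h => hqτ k hkτ j (congrArg Fin.val h)
    choose q' hq' using hqm
    have hA : (of fun i j : Fin d => M (Fin.castLE hdk.step i) (q j)) =
        of fun i j : Fin d => (M.submatrix Fin.castSucc m.succAbove) (Fin.castLE hdk i) (q' j) := by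
      ext i j
      simp [hq']
    rw [det_eq_of_row_eq_single M hlast, Fin.succAbove_last, hA, ih _ q' (fun i hi j => ?_)
      (hτ.mono (Set.Ico_subset_Ico_right k.le_succ))
      (fun i hi => (hτm i hi).trans_le (Nat.lt_succ_iff.mp m.2))
      (fun j j' h => (Fin.strictMono_succAbove m).lt_iff_lt.mp (by rw [hq', hq']; exact hq h))
      (fun i hi j h => hqτ i ⟨hi.1, hi.2.trans k.lt_succ_self⟩ j ?_), ← mul_assoc, ← pow_add,
      sum_Ico_succ_top hdk]
    · have hexp : (Fin.last k : ℕ) + m + (∑ j : Fin d, (j : ℕ) + ∑ i ∈ Ico d k, (i - τ i)) =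
          ∑ j : Fin d, (j : ℕ) + (∑ i ∈ Ico d k, (i - τ i) + (k - τ k)) + 2 * m := by
        have := hτk k hkτ
        simp [m]
        omega
      rw [hexp, pow_add, pow_mul, neg_one_sq, one_pow, mul_one]
    · rw [submatrix_apply, hM _ (by simpa using hi)]
      simp only [Fin.val_castSucc, Fin.val_succAbove_eq_iff_of_lt (hτm i ⟨hi, i.2⟩)]
    · rw [← hq', (Fin.val_succAbove_eq_iff_of_lt (hτm i hi) _).mpr h]

end Matrix

section Conjugate

variable {μ : ℕ → ℕ} {k : ℕ}

theorem conjP_eq_card (hk : ∀ i, k ≤ i → μ i = 0) (j : ℕ) :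
    conjP μ j = #{i ∈ range k | j < μ i} := by
  rw [conjP, ← Set.ncard_coe_finset, ← Nat.card_coe_set_eq]
  congr
  ext i
  simp only [Set.mem_ofPred_eq, coe_filter, mem_range]
  exact ⟨fun h => ⟨by_contra fun hi => by simp [hk i (by omega)] at h, h⟩, And.right⟩

theorem lt_conjP_iff (hμ : Antitone μ) (hk : ∀ i, k ≤ i → μ i = 0) {i j : ℕ} :
    i < conjP μ j ↔ j < μ i := by
  rw [conjP_eq_card hk]
  constructor
  · intro h
    by_contra! hij
    refine ((card_le_card fun x hx => ?_).trans (card_range i).le).not_gt h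
    simp only [mem_filter, mem_range] at hx ⊢
    by_contra! hxi
    exact (hx.2.trans_le (hμ hxi)).not_ge hij
  · intro h
    refine Nat.lt_of_succ_le ((card_range (i + 1)).symm.trans_le (card_le_card fun x hx => ?_))
    have hik : i < k := by_contra fun hik => by simp [hk i (by omega)] at h
    simp only [mem_filter, mem_range] at hx ⊢
    exact ⟨by omega, h.trans_le (hμ (by omega))⟩

theorem conjP_le (hμ : Antitone μ) (hk : ∀ i, k ≤ i → μ i = 0) (j : ℕ) : conjP μ j ≤ k := by
  by_contra! h
  simpa [hk k le_rfl] using (lt_conjP_iff hμ hk).mp h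

theorem conjP_antitone (hμ : Antitone μ) (hk : ∀ i, k ≤ i → μ i = 0) : Antitone (conjP μ) := by
  intro j j' hjj'
  by_contra! h
  exact lt_irrefl _ ((lt_conjP_iff hμ hk).mpr (hjj'.trans_lt ((lt_conjP_iff hμ hk).mp h)))

theorem sum_range_conjP (hμ : Antitone μ) (hk : ∀ i, k ≤ i → μ i = 0) (d : ℕ) :
    ∑ j ∈ range d, conjP μ j = ∑ i ∈ range k, min (μ i) d := by
  have hcount : ∀ c n, ∑ x ∈ range n, (if x < c then 1 else 0) = min c n := fun c n => by
    rw [sum_boole, Nat.cast_id, ← card_range (min c n)]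
    congr 1
    ext x
    simp only [mem_filter, mem_range]
    omega
  calc ∑ j ∈ range d, conjP μ j
      = ∑ j ∈ range d, ∑ i ∈ range k, (if j < μ i then 1 else 0) := by
        refine sum_congr rfl fun j _ => ?_
        simp_rw [← lt_conjP_iff hμ hk]
        rw [hcount, min_eq_left (conjP_le hμ hk j)]
    _ = ∑ i ∈ range k, min (μ i) d := by
        rw [sum_comm]
        exact sum_congr rfl fun i _ => hcount _ _

theorem durfee_le (hk : ∀ i, k ≤ i → μ i = 0) {d : ℕ} (hd : ∀ i, i < d ↔ i < μ i) : d ≤ k := by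
  by_contra! h
  simpa [hk k le_rfl] using (hd k).mp h

theorem sum_frobenius_legs (hμ : Antitone μ) (hk : ∀ i, k ≤ i → μ i = 0) {d : ℕ}
    (hd : ∀ i, i < d ↔ i < μ i) :
    ∑ j : Fin d, (conjP μ j - (j + 1)) = ∑ j : Fin d, (j : ℕ) + ∑ i ∈ Ico d k, μ i := by
  have hdk := durfee_le hk hd
  have hconj : ∑ j ∈ range d, conjP μ j = d * d + ∑ i ∈ Ico d k, μ i := by
    rw [sum_range_conjP hμ hk, ← sum_range_add_sum_Ico _ hdk]
    congr 1
    · refine (sum_congr rfl fun i hi => min_eq_right ?_).trans (by simp)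
      have := (hd (d - 1)).mp (by simp at hi; omega)
      have := hμ (show i ≤ d - 1 by simp at hi; omega)
      omega
    · refine sum_congr rfl fun i hi => min_eq_left ?_
      have := (hd d).not.mp (lt_irrefl d)
      have := hμ (mem_Ico.mp hi).1
      omega
  have hsub : ∑ j ∈ range d, (conjP μ j - (j + 1)) + ∑ j ∈ range d, (j + 1) =
      ∑ j ∈ range d, conjP μ j := by
    rw [← sum_add_distrib]
    refine sum_congr rfl fun j hj => Nat.sub_add_cancel ?_
    exact (lt_conjP_iff hμ hk).mpr ((hd j).mp (mem_range.mp hj))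
  have hsq : (∑ j ∈ range d, j) * 2 + d = d * d := by
    rw [sum_range_id_mul_two]
    cases d <;> simp
    ring
  rw [sum_add_distrib, sum_const, card_range, smul_eq_mul, mul_one] at hsub
  rw [Fin.sum_univ_eq_sum_range (fun j => conjP μ j - (j + 1)),
    Fin.sum_univ_eq_sum_range (fun j => j)]
  omega

end Conjugate

section JacobiTrudi

variable {R : Type*} [CommRing R] (H : ℤ → ℕ → R)

def jtRow (n : ℕ) (m : ℤ) : Fin n → R := fun j => H (m + j) j

def jtMatrix (ν : ℕ → ℕ) (n : ℕ) : Matrix (Fin n) (Fin n) R :=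
  of fun i : Fin n => jtRow H n ((ν i : ℤ) - i)

def jtCoeff (n : ℕ) (m : ℤ) : Fin n → R := jtRow H n m ᵥ* (jtMatrix H 0 n)⁻¹

variable {H}

theorem det_jtMatrix_zero (H0 : ∀ j, H 0 j = 1) (Hneg : ∀ r < 0, ∀ j, H r j = 0) (n : ℕ) :
    (jtMatrix H 0 n).det = 1 := by
  rw [det_of_isUpperTriangular]
  · exact prod_eq_one fun t _ => by simp [jtMatrix, jtRow, H0]
  · intro t j (h : j < t)
    exact Hneg _ (by simp only [Pi.zero_apply, Nat.cast_zero]; have := Fin.lt_def.mp h; omega) _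

theorem det_jtMatrix_eq_det_jtCoeff (H0 : ∀ j, H 0 j = 1) (Hneg : ∀ r < 0, ∀ j, H r j = 0)
    (ν : ℕ → ℕ) (n : ℕ) :
    (jtMatrix H ν n).det = (of fun i : Fin n => jtCoeff H n ((ν i : ℤ) - i)).det := by
  have h : (of fun i : Fin n => jtCoeff H n ((ν i : ℤ) - i)) =
      jtMatrix H ν n * (jtMatrix H 0 n)⁻¹ := rfl
  rw [h, det_mul, det_nonsing_inv, det_jtMatrix_zero H0 Hneg, Ring.inverse_one, mul_one]

theorem jtCoeff_neg (H0 : ∀ j, H 0 j = 1) (Hneg : ∀ r < 0, ∀ j, H r j = 0) {n t : ℕ}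
    (ht : t < n) (j : Fin n) : jtCoeff H n (-t) j = if (j : ℕ) = t then 1 else 0 := by
  have hrow : jtRow H n (-t) = jtMatrix H 0 n ⟨t, ht⟩ := by
    funext j
    simp [jtRow, jtMatrix]
  have hU : IsUnit (jtMatrix H 0 n).det := by rw [det_jtMatrix_zero H0 Hneg]; exact isUnit_one
  rw [jtCoeff, hrow, ← mul_apply_eq_vecMul, mul_nonsing_inv _ hU, one_apply]
  simp [Fin.ext_iff, eq_comm]

theorem det_jtMatrix_succ (H0 : ∀ j, H 0 j = 1) (Hneg : ∀ r < 0, ∀ j, H r j = 0) {ν : ℕ → ℕ}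
    {n : ℕ} (hν : ν n = 0) : (jtMatrix H ν (n + 1)).det = (jtMatrix H ν n).det := by
  have hlast : jtMatrix H ν (n + 1) (Fin.last n) = Pi.single (Fin.last n) 1 := by
    funext j
    rcases (Fin.le_last j).lt_or_eq with h | rfl
    · rw [Pi.single_eq_of_ne h.ne]
      exact Hneg _ (by simpa [hν, Fin.lt_def] using h) _
    · simp [jtMatrix, jtRow, hν, H0]
  rw [det_eq_of_row_eq_single _ hlast, Fin.succAbove_last, ← two_mul, pow_mul, neg_one_sq,
    one_pow, one_mul]
  rfl

theorem det_jtMatrix_of_le (H0 : ∀ j, H 0 j = 1) (Hneg : ∀ r < 0, ∀ j, H r j = 0) {ν : ℕ → ℕ}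
    {n : ℕ} (hν : ∀ i, n ≤ i → ν i = 0) {N : ℕ} (hN : n ≤ N) :
    (jtMatrix H ν N).det = (jtMatrix H ν n).det := by
  induction N, hN using Nat.le_induction with
  | base => rfl
  | succ N hN ih => rw [det_jtMatrix_succ H0 Hneg (hν N hN), ih]

theorem det_jtMatrix_hookP (H0 : ∀ j, H 0 j = 1) (Hneg : ∀ r < 0, ∀ j, H r j = 0) (p : ℕ)
    {Q n : ℕ} (hQ : Q < n) :
    (jtMatrix H (hookP p Q) (Q + 1)).det = (-1) ^ Q * jtCoeff H n (p + 1) ⟨Q, hQ⟩ := by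
  have hzero : ∀ r, Q + 1 ≤ r → hookP p Q r = 0 := fun r hr => by
    simp only [hookP]
    rw [if_neg (by omega), if_neg (by omega)]
  rw [← det_jtMatrix_of_le H0 Hneg hzero hQ]
  set τ : ℕ → ℕ := fun r => if r ≤ Q then r - 1 else r
  have hsum : ∑ r ∈ Ico 1 n, (r - τ r) = Q := by
    rw [← sum_Ico_consecutive _ (show 1 ≤ Q + 1 by omega) hQ,
      sum_congr rfl fun r hr => show r - τ r = 1 by simp at hr; simp [τ, if_pos hr.2]; omega,
      sum_congr rfl fun r hr => show r - τ r = 0 by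
        simp at hr; simp [τ, if_neg (by omega : ¬ r ≤ Q)]]
    simp
  rw [det_jtMatrix_eq_det_jtCoeff H0 Hneg, det_eq_of_lower_rows_eq_single (d := 1) (by omega) _ τ
    (fun _ => ⟨Q, hQ⟩) (fun r hr j => ?_)
    (fun r ⟨hr, _⟩ r' _ h => by simp only [τ]; split_ifs <;> omega)
    (fun r ⟨_, hr⟩ => by simp only [τ]; split_ifs <;> omega) (Subsingleton.strictAnti _)
    (fun r ⟨hr, _⟩ _ => by simp only [τ]; split_ifs <;> omega), hsum, det_unique]
  · simp [hookP]
  · have hrow : ((hookP p Q r : ℕ) : ℤ) - r = -((τ r : ℕ) : ℤ) := by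
      simp only [hookP, τ]
      split_ifs <;> omega
    rw [of_apply, hrow, jtCoeff_neg H0 Hneg (by simp only [τ]; split_ifs <;> omega)]

theorem det_jtMatrix_eq_frobenius (H0 : ∀ j, H 0 j = 1) (Hneg : ∀ r < 0, ∀ j, H r j = 0)
    {μ : ℕ → ℕ} (hμ : Antitone μ) {k : ℕ} (hk : ∀ i, k ≤ i → μ i = 0) {d : ℕ}
    (hd : ∀ i, i < d ↔ i < μ i) (q : Fin d → Fin k) (hq : ∀ j, (q j : ℕ) = conjP μ j - (j + 1)) :
    (jtMatrix H μ k).det =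
      (-1) ^ (∑ j, (q j : ℕ)) * (of fun i j : Fin d => jtCoeff H k ((μ i : ℤ) - i) (q j)).det := by
  have hdk := durfee_le hk hd
  have hμle : ∀ i, d ≤ i → μ i ≤ i := fun i hi => not_lt.mp ((hd i).not.mp (by omega))
  have hconj : ∀ j : Fin d, (q j : ℕ) + (j + 1) = conjP μ j := fun j => by
    have := (lt_conjP_iff hμ hk).mpr ((hd j).mp j.2)
    have := hq j
    omega
  rw [det_jtMatrix_eq_det_jtCoeff H0 Hneg, det_eq_of_lower_rows_eq_single hdk _ (fun i => i - μ i) q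
    (fun i hi j => ?_) (fun i ⟨hi, _⟩ i' ⟨_, hi'⟩ h => ?_) (fun i ⟨_, hi⟩ => by omega)
    (fun j j' h => ?_) (fun i ⟨hi, hik⟩ j => ?_)]
  · simp_rw [hq, sum_frobenius_legs hμ hk hd]
    congr 3
    exact sum_congr rfl fun i hi => by have := hμle i (mem_Ico.mp hi).1; omega
  · have hrow : ((μ i : ℕ) : ℤ) - i = -((i - μ i : ℕ) : ℤ) := by have := hμle i hi; omega
    rw [of_apply, hrow, jtCoeff_neg H0 Hneg (by omega)]
  · have := hμle i hi
    have := hμ h.le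
    show i - μ i < i' - μ i'
    omega
  · have := hconj j
    have := hconj j'
    have := conjP_antitone hμ hk (Fin.le_def.mp h.le)
    rw [Fin.lt_def]
    omega
  · have := hconj j
    have := hμle i hi
    rcases lt_or_ge (j : ℕ) (μ i) with h | h
    · have := (lt_conjP_iff hμ hk).mpr h
      omega
    · have := (lt_conjP_iff hμ hk (i := i) (j := j)).not.mpr h.not_gt
      omega

end JacobiTrudi

theorem multiparameter_giambelli_general (a : ℤ → ℂ)
    (hma : (ℤ → ℂ) → ℤ → SymFn)
    (hma0 : ∀ b : ℤ → ℂ, hma b 0 = 1)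
    (hmaneg : ∀ (b : ℤ → ℂ) (r : ℤ), r < 0 → hma b r = 0)
    (μ : ℕ → ℕ) (hμ : Antitone μ) (k : ℕ) (hk : ∀ i, k ≤ i → μ i = 0)
    (d : ℕ) (hd : ∀ i, i < d ↔ i < μ i) :
    mpSchur hma a μ k =
      Matrix.det (Matrix.of fun i j : Fin d =>
        mpSchur hma a (hookP (μ i - (i + 1)) (conjP μ j - (j + 1)))
          (conjP μ (j : ℕ) - (j : ℕ))) := by
  set H : ℤ → ℕ → SymFn := fun r j => hma (shiftSeq a (-(j : ℤ))) r
  have H0 : ∀ j, H 0 j = 1 := fun j => hma0 _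
  have Hneg : ∀ r < 0, ∀ j, H r j = 0 := fun r hr j => hmaneg _ r hr
  have hconj : ∀ j : Fin d, (j : ℕ) < conjP μ j := fun j => (lt_conjP_iff hμ hk).mpr ((hd j).mp j.2)
  set q : Fin d → Fin k := fun j =>
    ⟨conjP μ j - (j + 1), by have := conjP_le hμ hk j; have := hconj j; omega⟩
  have hhook : ∀ i j : Fin d, mpSchur hma a (hookP (μ i - (i + 1)) (conjP μ j - (j + 1)))
      (conjP μ j - j) = (-1) ^ (q j : ℕ) * jtCoeff H k ((μ i : ℤ) - i) (q j) := by
    intro i j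
    have hi := (hd i).mp i.2
    rw [show conjP μ j - j = (q j : ℕ) + 1 by have := hconj j; simp [q]; omega]
    refine (det_jtMatrix_hookP H0 Hneg _ (q j).2).trans ?_
    congr 2
    omega
  change (jtMatrix H μ k).det = _
  simp_rw [hhook]
  rw [det_jtMatrix_eq_frobenius H0 Hneg hμ hk hd q fun j => rfl, ← prod_pow_eq_pow_sum,
    ← det_mul_row]
  rfl

theorem multiparameter_giambelli (a : ℤ → ℂ)
    (hma : (ℤ → ℂ) → ℤ → SymFn)
    (hma0 : ∀ b : ℤ → ℂ, hma b 0 = 1)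
    (hmaneg : ∀ (b : ℤ → ℂ) (r : ℤ), r < 0 → hma b r = 0)
    (hrel : ∀ (b : ℤ → ℂ) (n : ℕ), 1 ≤ n →
      hh n = ∑ k ∈ Finset.range (n + 1),
        hma b k * MvPolynomial.C (hNum b k (n - k)))
    (μ : ℕ → ℕ) (hμ : Antitone μ) (k : ℕ) (hk : ∀ i, k ≤ i → μ i = 0)
    (d : ℕ) (hd : ∀ i, i < d ↔ i < μ i) :
    mpSchur hma a μ k =
      Matrix.det (Matrix.of fun i j : Fin d =>
        mpSchur hma a (hookP (μ i - (i + 1)) (conjP μ j - (j + 1)))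
          (conjP μ (j : ℕ) - (j : ℕ))) :=
  multiparameter_giambelli_general a hma hma0 hmaneg μ hμ k hk d hd
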